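/- arXiv:2206.13293 — 3 statements merged into one kernel-verified Lean document; each statement's English description precedes it below -/
import Mathlib

section
/- If f ∈ H^{1/2}(ℝ⁺) satisfies ∫₀^∞ |f(x)|²/x dx < ∞ and g ∈ H^{1/2}(ℝ⁺) also satisfies ∫₀^∞ |g(x)|²/x dx < ∞, then the function h defined by h(x) = f(x) for x > 0 and h(x) = g(−x) for x < 0 belongs to H^{1/2}(ℝ). -/
open scoped ENNReal
open MeasureTheory Set

noncomputable section

/-- The Gagliardo `H^{1/2}` seminorm (squared) on the half line. -/
def gagHalf (f : ℝ → ℝ) : ℝ≥0∞ :=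
  ∫⁻ x in Ioi (0:ℝ), ∫⁻ y in Ioi (0:ℝ), ENNReal.ofReal ((f x - f y) ^ 2 / (x - y) ^ 2)

/-- `f ∈ H^{1/2}(ℝ⁺)` (Gagliardo definition). -/
def MemH12Half (f : ℝ → ℝ) : Prop :=
  MemLp f 2 (volume.restrict (Ioi 0)) ∧ gagHalf f < ⊤

/-- The function glued from `f` on `ℝ⁺` and `g(−·)` on `ℝ⁻`. -/
def glue (f g : ℝ → ℝ) : ℝ → ℝ := fun x => if 0 < x then f x else g (-x)

/-- `h ∈ H^{1/2}(ℝ)` (Gagliardo definition on the whole line). -/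
def MemH12Line (h : ℝ → ℝ) : Prop :=
  MemLp h 2 volume ∧
    (∫⁻ x : ℝ, ∫⁻ y : ℝ, ENNReal.ofReal ((h x - h y) ^ 2 / (x - y) ^ 2)) < ⊤

/-! Split `ℝ × ℝ` into four quadrants and reflect each one onto `(0, ∞)²`. The two diagonal
quadrants are the half-line seminorms of `f` and `g`. On the off-diagonal ones `|x - y|` becomes
`x + y`, and `(f x - g y)² ≤ 2 f(x)² + 2 g(y)²` together with `∫₀^∞ (x + y)⁻² dy = 1 / x` bounds
them by the weighted integrals `∫₀^∞ f²/x` and `∫₀^∞ g²/x`. All quantities are invariant under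
changing `f` and `g` on null sets, so Tonelli may be applied to measurable representatives. -/

def hardyHalf (f : ℝ → ℝ) : ℝ≥0∞ :=
  ∫⁻ x in Ioi (0:ℝ), ENNReal.ofReal (f x ^ 2 / x)

def gagLine (h : ℝ → ℝ) : ℝ≥0∞ :=
  ∫⁻ x : ℝ, ∫⁻ y : ℝ, ENNReal.ofReal ((h x - h y) ^ 2 / (x - y) ^ 2)

theorem measurePreserving_neg_Iic :
    MeasurePreserving (Neg.neg : ℝ → ℝ) (volume.restrict (Iic 0)) (volume.restrict (Ioi 0)) := by
  have h := (Measure.measurePreserving_neg (volume : Measure ℝ)).restrict_preimage_emb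
    (MeasurableEquiv.neg ℝ).measurableEmbedding (Ioi 0)
  rwa [show (Neg.neg ⁻¹' Ioi (0:ℝ)) = Iio 0 by ext; simp,
    Measure.restrict_congr_set Iio_ae_eq_Iic] at h

theorem lintegral_eq_setLIntegral_Ioi_add_setLIntegral_Ioi_neg (F : ℝ → ℝ≥0∞) :
    ∫⁻ x, F x = (∫⁻ x in Ioi 0, F x) + ∫⁻ x in Ioi 0, F (-x) := by
  rw [← lintegral_add_compl F (measurableSet_Ioi (a := 0)), compl_Ioi,
    ← measurePreserving_neg_Iic.lintegral_comp_emb (MeasurableEquiv.neg ℝ).measurableEmbedding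
      fun x => F (-x)]
  simp only [neg_neg]

theorem lintegral_lintegral_eq_quadrants {K : ℝ → ℝ → ℝ≥0∞}
    (hK : Measurable (Function.uncurry K)) :
    ∫⁻ x, ∫⁻ y, K x y =
      (∫⁻ x in Ioi 0, ∫⁻ y in Ioi 0, K x y) + (∫⁻ x in Ioi 0, ∫⁻ y in Ioi 0, K x (-y)) +
        ((∫⁻ x in Ioi 0, ∫⁻ y in Ioi 0, K (-x) y) + ∫⁻ x in Ioi 0, ∫⁻ y in Ioi 0, K (-x) (-y)) := by
  have hslice : Measurable fun x => ∫⁻ y in Ioi 0, K x y := hK.lintegral_prod_right'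
  rw [lintegral_congr fun x => lintegral_eq_setLIntegral_Ioi_add_setLIntegral_Ioi_neg (K x),
    lintegral_eq_setLIntegral_Ioi_add_setLIntegral_Ioi_neg, lintegral_add_left hslice,
    lintegral_add_left (f := fun x => ∫⁻ y in Ioi 0, K (-x) y) (hslice.comp measurable_neg)]

theorem setLIntegral_Ioi_inv_add_sq {x : ℝ} (hx : 0 < x) :
    ∫⁻ y in Ioi 0, ENNReal.ofReal ((x + y) ^ 2)⁻¹ = ENNReal.ofReal x⁻¹ := by
  have hshift := (measurePreserving_add_left volume x).setLIntegral_comp_preimage_emb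
    (MeasurableEquiv.addLeft x).measurableEmbedding (fun u => ENNReal.ofReal (u ^ (-2 : ℝ))) (Ioi x)
  rw [show (x + ·) ⁻¹' Ioi x = Ioi 0 by ext; simp,
    ← ofReal_integral_eq_lintegral_ofReal (integrableOn_Ioi_rpow_of_lt (by norm_num) hx)
      ((ae_restrict_mem measurableSet_Ioi).mono fun u hu => Real.rpow_nonneg (hx.trans hu).le _),
    integral_Ioi_rpow_of_lt (by norm_num) hx] at hshift
  norm_num [Real.rpow_neg_one] at hshift
  exact hshift

theorem setLIntegral_Ioi_div_add_sq {x : ℝ} (hx : 0 < x) (c : ℝ) :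
    ∫⁻ y in Ioi 0, ENNReal.ofReal (c / (x + y) ^ 2) = ENNReal.ofReal (c / x) := by
  simp_rw [div_eq_mul_inv, ENNReal.ofReal_mul' (inv_nonneg.2 (sq_nonneg _))]
  rw [lintegral_const_mul' _ _ ENNReal.ofReal_ne_top, setLIntegral_Ioi_inv_add_sq hx,
    ENNReal.ofReal_mul' (inv_nonneg.2 hx.le)]

theorem setLIntegral_Ioi_setLIntegral_Ioi_sub_sq_div_add_sq_le {u v : ℝ → ℝ} (hu : Measurable u)
    (hv : Measurable v) :
    ∫⁻ x in Ioi 0, ∫⁻ y in Ioi 0, ENNReal.ofReal ((u x - v y) ^ 2 / (x + y) ^ 2) ≤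
      2 * hardyHalf u + 2 * hardyHalf v := by
  have hhardy (w : ℝ → ℝ) : ∫⁻ x in Ioi 0, ∫⁻ y in Ioi 0,
      ENNReal.ofReal (2 * w x ^ 2 / (x + y) ^ 2) = 2 * hardyHalf w := by
    rw [hardyHalf, ← lintegral_const_mul' _ _ ENNReal.ofNat_ne_top]
    refine setLIntegral_congr_fun measurableSet_Ioi fun x hx => ?_
    rw [setLIntegral_Ioi_div_add_sq hx, mul_div_assoc, ENNReal.ofReal_mul zero_le_two,
      ENNReal.ofReal_ofNat]
  have hA : Measurable (Function.uncurry fun x y : ℝ =>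
      ENNReal.ofReal (2 * u x ^ 2 / (x + y) ^ 2)) := by fun_prop
  have hB : Measurable (Function.uncurry fun x y : ℝ =>
      ENNReal.ofReal (2 * v y ^ 2 / (y + x) ^ 2)) := by fun_prop
  calc _ ≤ ∫⁻ x in Ioi 0, ∫⁻ y in Ioi 0, (ENNReal.ofReal (2 * u x ^ 2 / (x + y) ^ 2) +
          ENNReal.ofReal (2 * v y ^ 2 / (y + x) ^ 2)) := by
        gcongr with x y
        rw [add_comm y x, ← ENNReal.ofReal_add (by positivity) (by positivity), ← add_div]
        gcongr
        nlinarith [sq_nonneg (u x + v y)]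
    _ = (∫⁻ x in Ioi 0, ∫⁻ y in Ioi 0, ENNReal.ofReal (2 * u x ^ 2 / (x + y) ^ 2)) +
          ∫⁻ x in Ioi 0, ∫⁻ y in Ioi 0, ENNReal.ofReal (2 * v y ^ 2 / (y + x) ^ 2) := by
        rw [lintegral_congr fun x => lintegral_add_left hA.of_uncurry_left _]
        exact lintegral_add_left hA.lintegral_prod_right' _
    _ = 2 * hardyHalf u + 2 * hardyHalf v := by
        rw [lintegral_lintegral_swap hB.aemeasurable, hhardy, hhardy]

@[simp]
theorem glue_of_pos {f g : ℝ → ℝ} {x : ℝ} (hx : 0 < x) : glue f g x = f x := if_pos hx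

@[simp]
theorem glue_neg_of_pos {f g : ℝ → ℝ} {x : ℝ} (hx : 0 < x) : glue f g (-x) = g x := by
  simp [glue, hx.le]

theorem measurable_glue {f g : ℝ → ℝ} (hf : Measurable f) (hg : Measurable g) :
    Measurable (glue f g) :=
  Measurable.ite measurableSet_Ioi hf (hg.comp measurable_neg)

theorem gagLine_glue_le {f g : ℝ → ℝ} (hf : Measurable f) (hg : Measurable g) :
    gagLine (glue f g) ≤ gagHalf f + gagHalf g + 4 * (hardyHalf f + hardyHalf g) := by
  have hglue := measurable_glue hf hg
  have hK : Measurable (Function.uncurry fun x y : ℝ =>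
      ENNReal.ofReal ((glue f g x - glue f g y) ^ 2 / (x - y) ^ 2)) := by
    fun_prop
  have quadrant {K L : ℝ → ℝ → ℝ≥0∞} (h : ∀ x > 0, ∀ y > 0, K x y = L x y) :
      ∫⁻ x in Ioi 0, ∫⁻ y in Ioi 0, K x y = ∫⁻ x in Ioi 0, ∫⁻ y in Ioi 0, L x y :=
    setLIntegral_congr_fun measurableSet_Ioi fun x hx =>
      setLIntegral_congr_fun measurableSet_Ioi fun y hy => h x hx y hy
  calc gagLine (glue f g)
      = gagHalf f +
          (∫⁻ x in Ioi 0, ∫⁻ y in Ioi 0, ENNReal.ofReal ((f x - g y) ^ 2 / (x + y) ^ 2)) +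
          ((∫⁻ x in Ioi 0, ∫⁻ y in Ioi 0, ENNReal.ofReal ((g x - f y) ^ 2 / (x + y) ^ 2)) +
            gagHalf g) := by
        rw [gagLine, lintegral_lintegral_eq_quadrants hK]
        congr 2 <;> refine quadrant fun x hx y hy => ?_ <;>
          simp only [glue_of_pos, glue_neg_of_pos, hx, hy] <;> ring_nf
    _ ≤ gagHalf f + (2 * hardyHalf f + 2 * hardyHalf g) +
          ((2 * hardyHalf g + 2 * hardyHalf f) + gagHalf g) := by
        gcongr <;> exact setLIntegral_Ioi_setLIntegral_Ioi_sub_sq_div_add_sq_le ‹_› ‹_›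
    _ = gagHalf f + gagHalf g + 4 * (hardyHalf f + hardyHalf g) := by ring

theorem memLp_glue {f g : ℝ → ℝ} {p : ℝ≥0∞} (hf : MemLp f p (volume.restrict (Ioi 0)))
    (hg : MemLp g p (volume.restrict (Ioi 0))) : MemLp (glue f g) p volume := by
  classical
  have hg' : MemLp (g ∘ Neg.neg) p (volume.restrict (Ioi 0)ᶜ) := by
    rw [compl_Ioi]
    exact hg.comp_measurePreserving measurePreserving_neg_Iic
  convert hf.piecewise measurableSet_Ioi hg' using 1
  ext x
  by_cases hx : 0 < x <;> simp [glue, hx]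

theorem glue_ae_eq {f f' g g' : ℝ → ℝ} (hf : f =ᵐ[volume.restrict (Ioi 0)] f')
    (hg : g =ᵐ[volume.restrict (Ioi 0)] g') : glue f g =ᵐ[volume] glue f' g' := by
  rw [← Measure.restrict_add_restrict_compl (μ := volume) (measurableSet_Ioi (a := (0 : ℝ))),
    compl_Ioi]
  refine ae_add_measure_iff.2 ⟨?_, ?_⟩
  · filter_upwards [hf, ae_restrict_mem measurableSet_Ioi] with x hx hpos
    simp [glue_of_pos hpos, hx]
  · filter_upwards [measurePreserving_neg_Iic.quasiMeasurePreserving.ae_eq_comp hg,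
      ae_restrict_mem measurableSet_Iic] with x hx hnonpos
    simpa [glue, not_lt.2 (mem_Iic.1 hnonpos)] using hx

theorem lintegral_lintegral_sub_sq_div_congr_ae {μ : Measure ℝ} {f f' : ℝ → ℝ} (h : f =ᵐ[μ] f') :
    ∫⁻ x, ∫⁻ y, ENNReal.ofReal ((f x - f y) ^ 2 / (x - y) ^ 2) ∂μ ∂μ =
      ∫⁻ x, ∫⁻ y, ENNReal.ofReal ((f' x - f' y) ^ 2 / (x - y) ^ 2) ∂μ ∂μ := by
  refine lintegral_congr_ae ?_
  filter_upwards [h] with x hx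
  refine lintegral_congr_ae ?_
  filter_upwards [h] with y hy
  rw [hx, hy]

theorem hardyHalf_congr_ae {f f' : ℝ → ℝ} (h : f =ᵐ[volume.restrict (Ioi 0)] f') :
    hardyHalf f = hardyHalf f' :=
  lintegral_congr_ae (h.mono fun x hx => by simp only [hx])

/-- If `f, g ∈ H^{1/2}(ℝ⁺)` both satisfy the weighted Hardy-type integrability
`∫₀^∞ |·|²/x dx < ∞`, then the glued function belongs to `H^{1/2}(ℝ)`. -/
theorem stmt5 (f g : ℝ → ℝ)
    (hf : MemH12Half f)
    (hfw : ∫⁻ x in Ioi (0:ℝ), ENNReal.ofReal ((f x) ^ 2 / x) < ⊤)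
    (hg : MemH12Half g)
    (hgw : ∫⁻ x in Ioi (0:ℝ), ENNReal.ofReal ((g x) ^ 2 / x) < ⊤) :
    MemH12Line (glue f g) := by
  obtain ⟨f', hf'm, hff'⟩ := hf.1.aemeasurable
  obtain ⟨g', hg'm, hgg'⟩ := hg.1.aemeasurable
  have hgag_f : gagHalf f' < ⊤ :=
    (lintegral_lintegral_sub_sq_div_congr_ae hff').symm.trans_lt hf.2
  have hgag_g : gagHalf g' < ⊤ :=
    (lintegral_lintegral_sub_sq_div_congr_ae hgg').symm.trans_lt hg.2
  have hhardy_f : hardyHalf f' < ⊤ := (hardyHalf_congr_ae hff').symm.trans_lt hfw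
  have hhardy_g : hardyHalf g' < ⊤ := (hardyHalf_congr_ae hgg').symm.trans_lt hgw
  refine ⟨memLp_glue hf.1 hg.1, ?_⟩
  rw [lintegral_lintegral_sub_sq_div_congr_ae (glue_ae_eq hff' hgg')]
  exact (gagLine_glue_le hf'm hg'm).trans_lt (by finiteness)
end
end

section
/- With R_m defined as above (lifting via (ℱ_{x′} R_m g)(ξ,t) = χ(λ t ⟨ξ⟩) λ^{−m} ⟨ξ⟩^{−m} ĝ(ξ)), for every s > 0 there is a constant C (depending on χ, m, s but not on λ ≥ 1 or g) such that ‖R_m g‖_{H^{m+s+1/2}(ℝ^d)} ≤ C λ^s ‖g‖_{H^s(ℝ^{d−1})}. -/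
open scoped ENNReal FourierTransform
open MeasureTheory Set Real

noncomputable section

/-- The Japanese bracket `⟨ξ⟩ = (1 + |ξ|²)^{1/2}`. -/
def jap {n : ℕ} (ξ : EuclideanSpace ℝ (Fin n)) : ℝ := Real.sqrt (1 + ‖ξ‖ ^ 2)

lemma fourier_decay (χ : ℝ → ℝ) (hχs : ContDiff ℝ (⊤ : ℕ∞) χ) (hχc : HasCompactSupport χ) (N : ℕ) :
    ∃ B > (0:ℝ), ∀ σ : ℝ,
      ‖𝓕 (fun t : ℝ => (χ t : ℂ)) σ‖ * (1 + σ^2)^N ≤ B := by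
  set f : ℝ → ℂ := fun t => (χ t : ℂ) with hf
  have hfs : ContDiff ℝ (⊤ : ℕ∞) f := Complex.ofRealCLM.contDiff.comp hχs
  have hfc : HasCompactSupport f := hχc.comp_left (g := Complex.ofReal) (by simp)
  have hdecay : ∀ (k n : ℕ), ∃ C : ℝ, ∀ x : ℝ, ‖x‖^k * ‖iteratedFDeriv ℝ n f x‖ ≤ C := by
    intro k n
    have hcont : Continuous fun x : ℝ => ‖x‖^k * ‖iteratedFDeriv ℝ n f x‖ :=
      (continuous_norm.pow k).mul (hfs.continuous_iteratedFDeriv (by exact_mod_cast le_top)).norm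
    have hsupp : HasCompactSupport fun x : ℝ => ‖x‖^k * ‖iteratedFDeriv ℝ n f x‖ :=
      HasCompactSupport.mul_left ((hfc.iteratedFDeriv n).norm)
    obtain ⟨C, hC⟩ := hcont.bounded_above_of_compact_support hsupp
    exact ⟨C, fun x => le_trans (le_abs_self _) (hC x)⟩
  let F : SchwartzMap ℝ ℂ := ⟨f, hfs.of_le (by simp), hdecay⟩
  let Fh : SchwartzMap ℝ ℂ := SchwartzMap.fourierTransformCLM ℝ F
  have hFh : ∀ σ : ℝ, Fh σ = 𝓕 f σ := fun σ => rfl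
  obtain ⟨C0, hC0p, hC0⟩ := Fh.decay 0 0
  obtain ⟨C1, hC1p, hC1⟩ := Fh.decay (2*N) 0
  have hb : ∀ x : ℝ, ‖Fh x‖ ≤ C0 := by
    intro x
    have := hC0 x
    simpa [norm_iteratedFDeriv_zero] using this
  have hb1 : ∀ x : ℝ, |x|^(2*N) * ‖Fh x‖ ≤ C1 := by
    intro x
    have := hC1 x
    simpa [norm_iteratedFDeriv_zero] using this
  have hC0nn : 0 ≤ C0 := le_trans (norm_nonneg _) (hb 0)
  have hC1nn : 0 ≤ C1 := le_trans (by positivity) (hC1 0)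
  refine ⟨2^N * (C0 + C1) + 1, by positivity, ?_⟩
  intro σ
  have hFσ : ‖𝓕 f σ‖ = ‖Fh σ‖ := by rw [hFh]
  rw [hFσ]
  have hnn : (0:ℝ) ≤ ‖Fh σ‖ := norm_nonneg _
  rcases le_total (σ^2) 1 with h | h
  · have h1 : (1 + σ^2)^N ≤ 2^N := by
      apply pow_le_pow_left₀ (by positivity)
      linarith
    have : ‖Fh σ‖ * (1+σ^2)^N ≤ ‖Fh σ‖ * 2^N := by
      exact mul_le_mul_of_nonneg_left h1 hnn
    have h2 : ‖Fh σ‖ * 2^N ≤ 2^N * C0 := by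
      rw [mul_comm]
      exact mul_le_mul_of_nonneg_left (hb σ) (by positivity)
    nlinarith [pow_pos (show (0:ℝ) < 2 by norm_num) N]
  · have habs : σ^(2*N) = |σ|^(2*N) := by
      rw [pow_mul, pow_mul, sq_abs]
    have h1 : (1 + σ^2)^N ≤ 2^N * σ^(2*N) := by
      calc (1 + σ^2)^N ≤ (2*σ^2)^N := by
            apply pow_le_pow_left₀ (by positivity); linarith
        _ = 2^N * σ^(2*N) := by rw [mul_pow, pow_mul]
    have h2 : ‖Fh σ‖ * (1+σ^2)^N ≤ ‖Fh σ‖ * (2^N * σ^(2*N)) :=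
      mul_le_mul_of_nonneg_left h1 hnn
    have h3 : ‖Fh σ‖ * (2^N * σ^(2*N)) = 2^N * (|σ|^(2*N) * ‖Fh σ‖) := by
      rw [habs]; ring
    have h4 : 2^N * (|σ|^(2*N) * ‖Fh σ‖) ≤ 2^N * C1 :=
      mul_le_mul_of_nonneg_left (hb1 σ) (by positivity)
    nlinarith [pow_pos (show (0:ℝ) < 2 by norm_num) N]

lemma jap_ge_one {n : ℕ} (ξ : EuclideanSpace ℝ (Fin n)) : 1 ≤ jap ξ := by
  rw [jap, show (1:ℝ) = Real.sqrt 1 from (Real.sqrt_one).symm]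
  rw [Real.sqrt_one]
  exact Real.sqrt_le_sqrt (le_add_of_nonneg_right (by positivity)) |>.trans_eq' (by rw [Real.sqrt_one])

lemma lintegral_pi_div (a : ℝ) (ha : 0 < a) :
    ∫⁻ τ : ℝ, ENNReal.ofReal (a / (a^2 + τ^2)) = ENNReal.ofReal π := by
  have hfun : (fun τ : ℝ => a / (a^2 + τ^2)) = fun τ => a⁻¹ * (1 + (τ/a)^2)⁻¹ := by
    funext τ
    rw [div_pow]
    rw [eq_comm, inv_mul_eq_div, div_eq_div_iff (by positivity) (by positivity)]
    field_simp
  have hint : Integrable (fun τ : ℝ => a / (a^2 + τ^2)) := by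
    rw [hfun]
    exact (integrable_inv_one_add_sq.comp_div ha.ne').const_mul _
  have hval : ∫ τ : ℝ, a / (a^2 + τ^2) = π := by
    rw [hfun, MeasureTheory.integral_const_mul,
      MeasureTheory.Measure.integral_comp_div (fun x : ℝ => (1 + x^2)⁻¹) a,
      integral_univ_inv_one_add_sq, smul_eq_mul, abs_of_pos ha]
    field_simp
  rw [← MeasureTheory.ofReal_integral_eq_lintegral_ofReal hint
    (Filter.Eventually.of_forall fun τ => by positivity), hval]

lemma fourier_sq_decay (χ : ℝ → ℝ) (hχs : ContDiff ℝ (⊤ : ℕ∞) χ) (hχc : HasCompactSupport χ)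
    (p : ℝ) (hp : 0 ≤ p)
    (hdec : ∀ N : ℕ, ∃ B > (0:ℝ), ∀ σ : ℝ,
      ‖𝓕 (fun t : ℝ => (χ t : ℂ)) σ‖ * (1 + σ^2)^N ≤ B) :
    ∃ B > (0:ℝ), ∀ σ : ℝ,
      ‖𝓕 (fun t : ℝ => (χ t : ℂ)) σ‖^2 * (1 + σ^2) ^ p ≤ B / (1 + σ^2) := by
  set K : ℕ := ⌈p⌉₊ with hK
  obtain ⟨B, hB0, hB⟩ := hdec (K + 1)
  refine ⟨B^2, by positivity, fun σ => ?_⟩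
  set v : ℝ := ‖𝓕 (fun t : ℝ => (χ t : ℂ)) σ‖ with hv
  have hvnn : 0 ≤ v := norm_nonneg _
  have hq1 : (1:ℝ) ≤ 1 + σ^2 := le_add_of_nonneg_right (by positivity)
  have hq0 : (0:ℝ) < 1 + σ^2 := by linarith
  have hpM : p ≤ ((2*K+1 : ℕ) : ℝ) := by
    have := Nat.le_ceil p
    push_cast
    push_cast at this
    linarith
  have h1 : (1 + σ^2) ^ p ≤ (1 + σ^2) ^ (2*K+1 : ℕ) := by
    calc (1 + σ^2) ^ p ≤ (1 + σ^2) ^ (((2*K+1 : ℕ)) : ℝ) :=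
          Real.rpow_le_rpow_of_exponent_le hq1 hpM
      _ = (1 + σ^2) ^ (2*K+1 : ℕ) := Real.rpow_natCast _ _
  have h2 : v^2 * (1 + σ^2) ^ (2*K+1 : ℕ) ≤ B^2 / (1 + σ^2) := by
    rw [le_div_iff₀ hq0]
    have he : v^2 * (1 + σ^2) ^ (2*K+1 : ℕ) * (1 + σ^2) = (v * (1 + σ^2)^(K+1))^2 := by
      ring
    rw [he]
    exact pow_le_pow_left₀ (by positivity) (hB σ) 2
  calc v^2 * (1 + σ^2) ^ p ≤ v^2 * (1 + σ^2) ^ (2*K+1 : ℕ) :=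
        mul_le_mul_of_nonneg_left h1 (by positivity)
    _ ≤ B^2 / (1 + σ^2) := h2

/-- Estimate of the `H^{m+s+1/2}(ℝ^d)` norm of the lifting `R_m g`, computed on the
Fourier side: the full space-time Fourier transform of `R_m g` is
`χ̂(τ/(λ⟨ξ⟩)) (λ⟨ξ⟩)^{−(m+1)} ĝ(ξ)`, and its weighted `L²` norm with weight
`(⟨ξ⟩² + τ²)^{m+s+1/2}` is bounded by `C λ^{2s}` times the `H^s` norm of `g`,
with `C` independent of `λ ≥ 1` and `g` (here `G = ĝ`). -/
theorem stmt9 (n m : ℕ) (χ : ℝ → ℝ)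
    (hχs : ContDiff ℝ (⊤ : ℕ∞) χ) (hχc : HasCompactSupport χ)
    (hχd : ∀ k : ℕ, iteratedDeriv k χ 0 = if k = m then 1 else 0)
    (s : ℝ) (hs : 0 < s) :
    ∃ C > (0:ℝ), ∀ lam : ℝ, 1 ≤ lam → ∀ G : EuclideanSpace ℝ (Fin n) → ℂ,
      (∫⁻ ξ : EuclideanSpace ℝ (Fin n), ∫⁻ τ : ℝ,
          ENNReal.ofReal
            (‖𝓕 (fun t : ℝ => (χ t : ℂ)) (τ / (lam * jap ξ))‖ ^ 2
              * ‖G ξ‖ ^ 2 / (lam * jap ξ) ^ (2 * (m + 1))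
              * ((jap ξ) ^ 2 + τ ^ 2) ^ ((m : ℝ) + s + 1/2))) ≤
        ENNReal.ofReal (C * lam ^ (2 * s)) *
          ∫⁻ ξ : EuclideanSpace ℝ (Fin n),
            ENNReal.ofReal ((jap ξ) ^ (2 * s) * ‖G ξ‖ ^ 2) := by
  have hp : (0:ℝ) ≤ (m:ℝ) + s + 1/2 := by positivity
  obtain ⟨B, hB0, hB⟩ := fourier_sq_decay χ hχs hχc ((m:ℝ) + s + 1/2) hp
    (fourier_decay χ hχs hχc)
  refine ⟨B * π, by positivity, ?_⟩
  intro lam hlam G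
  set p : ℝ := (m : ℝ) + s + 1/2 with hpdef
  have key : ∀ ξ : EuclideanSpace ℝ (Fin n),
      (∫⁻ τ : ℝ, ENNReal.ofReal
            (‖𝓕 (fun t : ℝ => (χ t : ℂ)) (τ / (lam * jap ξ))‖ ^ 2
              * ‖G ξ‖ ^ 2 / (lam * jap ξ) ^ (2 * (m + 1))
              * ((jap ξ) ^ 2 + τ ^ 2) ^ p)) ≤
        ENNReal.ofReal ((B * π) * lam ^ (2 * s)) *
          ENNReal.ofReal ((jap ξ) ^ (2 * s) * ‖G ξ‖ ^ 2) := by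
    intro ξ
    set j : ℝ := jap ξ with hjdef
    have hj : 1 ≤ j := jap_ge_one ξ
    have ha1 : 1 ≤ lam * j := by nlinarith
    have ha : 0 < lam * j := by linarith
    set a : ℝ := lam * j with hadef
    have hane : a ≠ 0 := ha.ne'
    clear_value j a
    have hkey : ((a^2 : ℝ)) ^ p * a^2 = a ^ (2*s) * a * a^(2*(m+1)) := by
      have e1 : ((a^2 : ℝ)) ^ p = a ^ (2*p) := by
        rw [← Real.rpow_natCast a 2, ← Real.rpow_mul ha.le]
        norm_num
      have e2 : a ^ (2*p) * a^2 = a ^ (2*p + (2:ℕ)) := by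
        rw [Real.rpow_add ha, Real.rpow_natCast]
      have e3 : a ^ (2*s) * a * a^(2*(m+1)) = a ^ (2*s + 1 + (2*(m+1) : ℕ)) := by
        rw [Real.rpow_add ha, Real.rpow_add ha, Real.rpow_one, Real.rpow_natCast]
      rw [e1, e2, e3]
      congr 1
      rw [hpdef]
      push_cast
      ring
    have hpt : ∀ τ : ℝ,
        ‖𝓕 (fun t : ℝ => (χ t : ℂ)) (τ / a)‖ ^ 2
            * ‖G ξ‖ ^ 2 / a ^ (2 * (m + 1)) * (j ^ 2 + τ ^ 2) ^ p
          ≤ (B * ‖G ξ‖^2 * a ^ (2*s)) * (a / (a^2 + τ^2)) := by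
      intro τ
      set v : ℝ := ‖𝓕 (fun t : ℝ => (χ t : ℂ)) (τ / a)‖ with hv
      have hvnn : 0 ≤ v := norm_nonneg _
      have hq0 : (0:ℝ) < 1 + (τ/a)^2 := by positivity
      have hsum : a^2 + τ^2 = a^2 * (1 + (τ/a)^2) := by
        field_simp
      have h1 : (j^2 + τ^2) ^ p ≤ (a^2 + τ^2) ^ p := by
        apply Real.rpow_le_rpow (by positivity) _ (by rw [hpdef]; positivity)
        have hja : j ≤ a := by nlinarith
        nlinarith
      have h2 : ((a^2 + τ^2) : ℝ) ^ p = ((a^2 : ℝ)) ^ p * (1 + (τ/a)^2) ^ p := by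
        rw [hsum, Real.mul_rpow (by positivity) hq0.le]
      have hBτ : v^2 * (1 + (τ/a)^2) ^ p ≤ B / (1 + (τ/a)^2) := hB (τ/a)
      calc v ^ 2 * ‖G ξ‖ ^ 2 / a ^ (2 * (m + 1)) * (j ^ 2 + τ ^ 2) ^ p
          ≤ v ^ 2 * ‖G ξ‖ ^ 2 / a ^ (2 * (m + 1)) * (((a^2 : ℝ)) ^ p * (1 + (τ/a)^2) ^ p) := by
            apply mul_le_mul_of_nonneg_left (h1.trans_eq h2) (by positivity)
        _ = (‖G ξ‖ ^ 2 * ((a^2 : ℝ)) ^ p / a ^ (2 * (m + 1))) * (v^2 * (1 + (τ/a)^2) ^ p) := by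
            ring
        _ ≤ (‖G ξ‖ ^ 2 * ((a^2 : ℝ)) ^ p / a ^ (2 * (m + 1))) * (B / (1 + (τ/a)^2)) := by
            apply mul_le_mul_of_nonneg_left hBτ (by positivity)
        _ = (B * ‖G ξ‖^2 * a ^ (2*s)) * (a / (a^2 + τ^2)) := by
            have hq : (1 + (τ/a)^2) = (a^2+τ^2)/a^2 := by field_simp
            have hden : (0:ℝ) < a^2 + τ^2 := by positivity
            rw [hq, div_div_eq_mul_div]
            field_simp
            have hk2 : ((a^2 : ℝ)) ^ p * a = a ^ (2*s) * a^(2*(m+1)) := by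
              apply mul_right_cancel₀ hane
              linear_combination hkey
            linear_combination ‖G ξ‖^2 * hk2
    have hKnn : (0:ℝ) ≤ B * ‖G ξ‖^2 * a ^ (2*s) := by positivity
    refine le_trans (lintegral_mono fun τ => ENNReal.ofReal_le_ofReal (hpt τ)) ?_
    have step1 : (∫⁻ τ : ℝ, ENNReal.ofReal ((B * ‖G ξ‖^2 * a ^ (2*s)) * (a / (a^2 + τ^2))))
        = ENNReal.ofReal (B * ‖G ξ‖^2 * a ^ (2*s)) * ENNReal.ofReal π := by
      simp_rw [ENNReal.ofReal_mul hKnn]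
      rw [lintegral_const_mul' _ _ ENNReal.ofReal_ne_top, lintegral_pi_div a ha]
    rw [step1, ← ENNReal.ofReal_mul (by positivity), ← ENNReal.ofReal_mul (by positivity)]
    apply le_of_eq
    congr 1
    rw [hadef, Real.mul_rpow (by linarith : (0:ℝ) ≤ lam) (by linarith : (0:ℝ) ≤ j)]
    ring
  refine le_trans (lintegral_mono key) ?_
  rw [lintegral_const_mul' _ _ ENNReal.ofReal_ne_top]
end
end

section
/- With R_m defined as above, for every 0 ≤ r < m + 1/2 there is a constant C (independent of λ ≥ 1) such that ‖R_m g‖_{H^r(ℝ^d)} ≤ C λ^{−(m−r)−1/2} ‖g‖_{L²(ℝ^{d−1})}. In particular, the operator norm of R_m : L²(ℝ^{d−1}) → H^r(ℝ^d) tends to 0 as λ → ∞. -/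
open scoped ENNReal FourierTransform
open MeasureTheory Set Filter Real

noncomputable section

/-- Change of variables `τ ↦ τ / a` in a lower Lebesgue integral. -/
lemma aux_cov {a : ℝ} (ha : 0 < a) {f : ℝ → ℝ≥0∞} (hf : Measurable f) :
    ∫⁻ τ : ℝ, f (τ / a) = ENNReal.ofReal a * ∫⁻ s, f s := by
  have h1 : (fun τ : ℝ => f (τ / a)) = f ∘ (fun τ : ℝ => a⁻¹ * τ) := by
    funext τ; simp [div_eq_inv_mul]
  rw [h1]
  rw [show (f ∘ fun τ : ℝ => a⁻¹ * τ) = fun τ : ℝ => f (a⁻¹ * τ) from rfl,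
    ← lintegral_map hf (measurable_const_mul _),
    Real.map_volume_mul_left (inv_ne_zero ha.ne'), inv_inv, abs_of_pos ha,
    lintegral_smul_measure, smul_eq_mul]

/-- A smooth compactly supported function (complexified) is a Schwartz function. -/
lemma aux_toSchwartz (χ : ℝ → ℝ) (hχs : ContDiff ℝ (⊤ : ℕ∞) χ) (hχc : HasCompactSupport χ) :
    ∃ φS : SchwartzMap ℝ ℂ, ⇑φS = fun t : ℝ => (χ t : ℂ) := by
  have hφs : ContDiff ℝ (⊤ : ℕ∞) (fun t : ℝ => (χ t : ℂ)) :=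
    Complex.ofRealCLM.contDiff.comp hχs
  have hφc : HasCompactSupport (fun t : ℝ => (χ t : ℂ)) :=
    hχc.comp_left (g := fun x : ℝ => (x : ℂ)) Complex.ofReal_zero
  refine ⟨⟨fun t : ℝ => (χ t : ℂ), hφs.of_le (by simp), ?_⟩, rfl⟩
  intro k l
  have h2 : HasCompactSupport fun x : ℝ =>
      ‖x‖ ^ k * ‖iteratedFDeriv ℝ l (fun t : ℝ => (χ t : ℂ)) x‖ := by
    apply HasCompactSupport.mul_left
    exact (hφc.iteratedFDeriv l).norm
  obtain ⟨C, hC⟩ := h2.exists_bound_of_continuous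
    (((continuous_norm).pow k).mul (hφs.continuous_iteratedFDeriv (by exact_mod_cast le_top)).norm)
  exact ⟨C, fun x => (le_abs_self _).trans (hC x)⟩

/-- Finiteness of the weighted `L²` integral of a Schwartz function. -/
lemma aux_Ifin (ψ : SchwartzMap ℝ ℂ) (r : ℝ) :
    ∫⁻ s : ℝ, ENNReal.ofReal (‖ψ s‖ ^ 2 * (1 + s ^ 2) ^ r) < ⊤ := by
  set k := ⌈r⌉₊ with hk
  obtain ⟨M, hM0, hM⟩ := ψ.decay 0 0
  simp only [pow_zero, one_mul, norm_iteratedFDeriv_zero] at hM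
  set F : ℝ → ℝ := fun s => M * 2 ^ k * (‖ψ s‖ + ‖s‖ ^ (2 * k) * ‖ψ s‖) with hF
  have hFi : Integrable F := by
    apply Integrable.const_mul
    exact (ψ.integrable.norm).add (ψ.integrable_pow_mul volume (2 * k))
  have hpt : ∀ s : ℝ, ‖ψ s‖ ^ 2 * (1 + s ^ 2) ^ r ≤ F s := by
    intro s
    have h1 : (1 + s ^ 2) ^ r ≤ (1 + s ^ 2) ^ (k : ℝ) :=
      Real.rpow_le_rpow_of_exponent_le (by nlinarith) (Nat.le_ceil r)
    have h2 : (1 + s ^ 2) ^ (k : ℝ) = (1 + s ^ 2) ^ k := Real.rpow_natCast _ _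
    have h3 : (1 + s ^ 2) ^ k ≤ 2 ^ k * (1 + (s ^ 2) ^ k) := by
      rcases le_total (s ^ 2) 1 with h | h
      · calc (1 + s ^ 2) ^ k ≤ 2 ^ k :=
              pow_le_pow_left₀ (by positivity) (by linarith) k
          _ ≤ 2 ^ k * (1 + (s ^ 2) ^ k) := by
              nlinarith [pow_nonneg (sq_nonneg s) k, pow_pos (zero_lt_two (α := ℝ)) k]
      · calc (1 + s ^ 2) ^ k ≤ (2 * s ^ 2) ^ k :=
              pow_le_pow_left₀ (by positivity) (by linarith) k
          _ = 2 ^ k * (s ^ 2) ^ k := mul_pow _ _ _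
          _ ≤ 2 ^ k * (1 + (s ^ 2) ^ k) := by
              nlinarith [pow_nonneg (sq_nonneg s) k, pow_pos (zero_lt_two (α := ℝ)) k]
    have hprod : (1 + s ^ 2) ^ r ≤ 2 ^ k * (1 + (s ^ 2) ^ k) := h1.trans (h2 ▸ h3)
    have hψM : ‖ψ s‖ ≤ M := hM s
    calc ‖ψ s‖ ^ 2 * (1 + s ^ 2) ^ r ≤ ‖ψ s‖ ^ 2 * (2 ^ k * (1 + (s ^ 2) ^ k)) :=
          mul_le_mul_of_nonneg_left hprod (by positivity)
      _ ≤ (M * ‖ψ s‖) * (2 ^ k * (1 + (s ^ 2) ^ k)) := by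
          have h4 : ‖ψ s‖ ^ 2 ≤ M * ‖ψ s‖ := by nlinarith [norm_nonneg (ψ s)]
          exact mul_le_mul_of_nonneg_right h4 (by positivity)
      _ = F s := by
          rw [hF]; simp only [Real.norm_eq_abs]
          rw [show |s| ^ (2 * k) = (s ^ 2) ^ k by rw [pow_mul, sq_abs]]
          ring
  calc ∫⁻ s : ℝ, ENNReal.ofReal (‖ψ s‖ ^ 2 * (1 + s ^ 2) ^ r)
      ≤ ∫⁻ s : ℝ, ENNReal.ofReal (F s) :=
        lintegral_mono fun s => ENNReal.ofReal_le_ofReal (hpt s)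
    _ < ⊤ := hFi.lintegral_lt_top

/-- Power-counting estimate. -/
lemma aux_pow {lam a : ℝ} {m : ℕ} {r : ℝ} (hlam : 1 ≤ lam) (hla : lam ≤ a)
    (he : -(2 * ((m : ℝ) - r)) - 1 ≤ 0) :
    (a ^ 2) ^ r * a / a ^ (2 * (m + 1)) ≤ lam ^ (-(2 * ((m : ℝ) - r)) - 1) := by
  have hlam0 : (0:ℝ) < lam := lt_of_lt_of_le one_pos hlam
  have ha0 : (0:ℝ) < a := lt_of_lt_of_le hlam0 hla
  have h1 : (a ^ 2) ^ r = a ^ ((2:ℝ) * r) := by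
    rw [← Real.rpow_natCast a 2, ← Real.rpow_mul ha0.le]; norm_num
  have h2 : a ^ (2 * (m + 1)) = a ^ (2 * (m : ℝ) + 2) := by
    rw [← Real.rpow_natCast a (2 * (m + 1))]; congr 1; push_cast; ring
  calc (a ^ 2) ^ r * a / a ^ (2 * (m + 1))
      = a ^ ((2:ℝ) * r) * a ^ (1:ℝ) / a ^ (2 * (m : ℝ) + 2) := by
        rw [h1, h2, Real.rpow_one]
    _ = a ^ ((2:ℝ) * r + 1 - (2 * (m : ℝ) + 2)) := by
        rw [← Real.rpow_add ha0, ← Real.rpow_sub ha0]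
    _ = a ^ (-(2 * ((m : ℝ) - r)) - 1) := by congr 1; ring
    _ ≤ lam ^ (-(2 * ((m : ℝ) - r)) - 1) :=
        Real.rpow_le_rpow_of_nonpos hlam0 hla he

/-- Low-norm smallness of the lifting `R_m`: for `0 ≤ r < m + 1/2`,
`‖R_m g‖_{H^r(ℝ^d)} ≤ C λ^{−(m−r)−1/2} ‖g‖_{L²}` with `C` independent of `λ ≥ 1`
(norms computed on the Fourier side, `G = ĝ`); in particular the operator norm
`L² → H^r` tends to `0` as `λ → ∞`. -/
theorem stmt10 (n m : ℕ) (χ : ℝ → ℝ)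
    (hχs : ContDiff ℝ (⊤ : ℕ∞) χ) (hχc : HasCompactSupport χ)
    (hχd : ∀ k : ℕ, iteratedDeriv k χ 0 = if k = m then 1 else 0)
    (r : ℝ) (hr0 : 0 ≤ r) (hr : r < (m : ℝ) + 1/2) :
    ∃ C > (0:ℝ),
      (∀ lam : ℝ, 1 ≤ lam → ∀ G : EuclideanSpace ℝ (Fin n) → ℂ,
        (∫⁻ ξ : EuclideanSpace ℝ (Fin n), ∫⁻ τ : ℝ,
            ENNReal.ofReal
              (‖𝓕 (fun t : ℝ => (χ t : ℂ)) (τ / (lam * jap ξ))‖ ^ 2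
                * ‖G ξ‖ ^ 2 / (lam * jap ξ) ^ (2 * (m + 1))
                * ((jap ξ) ^ 2 + τ ^ 2) ^ r)) ≤
          ENNReal.ofReal (C * lam ^ (-(2 * ((m : ℝ) - r)) - 1)) *
            ∫⁻ ξ : EuclideanSpace ℝ (Fin n), ENNReal.ofReal (‖G ξ‖ ^ 2)) ∧
      Tendsto (fun lam : ℝ => C * lam ^ (-(2 * ((m : ℝ) - r)) - 1)) atTop (nhds 0) := by
  obtain ⟨φS, hφS⟩ := aux_toSchwartz χ hχs hχc
  set ψ : SchwartzMap ℝ ℂ := SchwartzMap.fourierTransformCLM ℝ φS with hψdef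
  have hψ : ∀ x : ℝ, 𝓕 (fun t : ℝ => (χ t : ℂ)) x = ψ x := by
    intro x; rw [← hφS]; rfl
  set I : ℝ≥0∞ := ∫⁻ s : ℝ, ENNReal.ofReal (‖ψ s‖ ^ 2 * (1 + s ^ 2) ^ r) with hIdef
  have hIlt : I < ⊤ := aux_Ifin ψ r
  set C : ℝ := I.toReal + 1 with hCdef
  have hC0 : 0 < C := by positivity
  have hIC : I ≤ ENNReal.ofReal C := by
    rw [hCdef]
    conv_lhs => rw [← ENNReal.ofReal_toReal hIlt.ne]
    exact ENNReal.ofReal_le_ofReal (by linarith)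
  have he : -(2 * ((m : ℝ) - r)) - 1 ≤ 0 := by linarith
  have hcont : Continuous fun s : ℝ => ‖ψ s‖ ^ 2 * (1 + s ^ 2) ^ r :=
    (ψ.continuous.norm.pow 2).mul
      ((continuous_const.add (continuous_pow 2)).rpow_const fun s => Or.inl (by positivity : (1:ℝ) + s ^ 2 ≠ 0))
  have hmeas : Measurable fun s : ℝ => ENNReal.ofReal (‖ψ s‖ ^ 2 * (1 + s ^ 2) ^ r) :=
    ENNReal.measurable_ofReal.comp hcont.measurable
  refine ⟨C, hC0, ?_, ?_⟩
  · intro lam hlam G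
    have hlam0 : (0:ℝ) < lam := lt_of_lt_of_le one_pos hlam
    have key : ∀ ξ : EuclideanSpace ℝ (Fin n),
        (∫⁻ τ : ℝ, ENNReal.ofReal
            (‖𝓕 (fun t : ℝ => (χ t : ℂ)) (τ / (lam * jap ξ))‖ ^ 2
              * ‖G ξ‖ ^ 2 / (lam * jap ξ) ^ (2 * (m + 1))
              * ((jap ξ) ^ 2 + τ ^ 2) ^ r)) ≤
          ENNReal.ofReal (C * lam ^ (-(2 * ((m : ℝ) - r)) - 1)) *
            ENNReal.ofReal (‖G ξ‖ ^ 2) := by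
      intro ξ
      set j : ℝ := jap ξ with hj
      have hj1 : (1:ℝ) ≤ j := by
        rw [hj, jap]
        calc (1:ℝ) = Real.sqrt 1 := Real.sqrt_one.symm
          _ ≤ Real.sqrt (1 + ‖ξ‖ ^ 2) := Real.sqrt_le_sqrt (le_add_of_nonneg_right (by positivity))
      set a : ℝ := lam * j with ha
      have hla : lam ≤ a := by rw [ha]; nlinarith
      have ha0 : (0:ℝ) < a := lt_of_lt_of_le hlam0 hla
      set K : ℝ := ‖G ξ‖ ^ 2 * ((a ^ 2) ^ r / a ^ (2 * (m + 1))) with hK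
      have hK0 : 0 ≤ K := by positivity
      have step1 : ∀ τ : ℝ,
          ‖𝓕 (fun t : ℝ => (χ t : ℂ)) (τ / a)‖ ^ 2
            * ‖G ξ‖ ^ 2 / a ^ (2 * (m + 1)) * (j ^ 2 + τ ^ 2) ^ r ≤
          K * (‖ψ (τ / a)‖ ^ 2 * (1 + (τ / a) ^ 2) ^ r) := by
        intro τ
        rw [hψ]
        have hkey : (j ^ 2 + τ ^ 2) ^ r ≤ (a ^ 2) ^ r * (1 + (τ / a) ^ 2) ^ r := by
          rw [← Real.mul_rpow (by positivity) (by positivity)]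
          apply Real.rpow_le_rpow (by positivity) ?_ hr0
          have hid : a ^ 2 * (1 + (τ / a) ^ 2) = a ^ 2 + τ ^ 2 := by
            field_simp
          rw [hid]
          have hja : j ≤ a := by rw [ha]; nlinarith
          nlinarith [pow_le_pow_left₀ (le_trans zero_le_one hj1) hja 2]
        calc ‖ψ (τ / a)‖ ^ 2 * ‖G ξ‖ ^ 2 / a ^ (2 * (m + 1)) * (j ^ 2 + τ ^ 2) ^ r
            ≤ ‖ψ (τ / a)‖ ^ 2 * ‖G ξ‖ ^ 2 / a ^ (2 * (m + 1))
                * ((a ^ 2) ^ r * (1 + (τ / a) ^ 2) ^ r) :=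
              mul_le_mul_of_nonneg_left hkey (by positivity)
          _ = K * (‖ψ (τ / a)‖ ^ 2 * (1 + (τ / a) ^ 2) ^ r) := by
              rw [hK]; ring
      have hcov : (∫⁻ τ : ℝ,
          ENNReal.ofReal (‖ψ (τ / a)‖ ^ 2 * (1 + (τ / a) ^ 2) ^ r)) =
          ENNReal.ofReal a * I := aux_cov ha0 hmeas
      calc (∫⁻ τ : ℝ, ENNReal.ofReal
              (‖𝓕 (fun t : ℝ => (χ t : ℂ)) (τ / a)‖ ^ 2
                * ‖G ξ‖ ^ 2 / a ^ (2 * (m + 1)) * (j ^ 2 + τ ^ 2) ^ r))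
          ≤ ∫⁻ τ : ℝ,
              ENNReal.ofReal (K * (‖ψ (τ / a)‖ ^ 2 * (1 + (τ / a) ^ 2) ^ r)) :=
            lintegral_mono fun τ => ENNReal.ofReal_le_ofReal (step1 τ)
        _ = ENNReal.ofReal K *
              ∫⁻ τ : ℝ, ENNReal.ofReal (‖ψ (τ / a)‖ ^ 2 * (1 + (τ / a) ^ 2) ^ r) := by
            simp_rw [ENNReal.ofReal_mul hK0]
            exact lintegral_const_mul' _ _ ENNReal.ofReal_ne_top
        _ = ENNReal.ofReal K * (ENNReal.ofReal a * I) := by rw [hcov]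
        _ = ENNReal.ofReal (K * a) * I := by
            rw [ENNReal.ofReal_mul hK0, mul_assoc]
        _ ≤ ENNReal.ofReal (‖G ξ‖ ^ 2 * lam ^ (-(2 * ((m : ℝ) - r)) - 1)) *
              ENNReal.ofReal C := by
            refine mul_le_mul' (ENNReal.ofReal_le_ofReal ?_) hIC
            have hpow := aux_pow (m := m) (r := r) hlam hla he
            calc K * a = ‖G ξ‖ ^ 2 * ((a ^ 2) ^ r * a / a ^ (2 * (m + 1))) := by
                  rw [hK]; ring
              _ ≤ ‖G ξ‖ ^ 2 * lam ^ (-(2 * ((m : ℝ) - r)) - 1) :=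
                  mul_le_mul_of_nonneg_left hpow (by positivity)
        _ = ENNReal.ofReal (C * lam ^ (-(2 * ((m : ℝ) - r)) - 1)) *
              ENNReal.ofReal (‖G ξ‖ ^ 2) := by
            rw [← ENNReal.ofReal_mul (by positivity), ← ENNReal.ofReal_mul (by positivity)]
            congr 1; ring
    calc (∫⁻ ξ : EuclideanSpace ℝ (Fin n), ∫⁻ τ : ℝ,
            ENNReal.ofReal
              (‖𝓕 (fun t : ℝ => (χ t : ℂ)) (τ / (lam * jap ξ))‖ ^ 2
                * ‖G ξ‖ ^ 2 / (lam * jap ξ) ^ (2 * (m + 1))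
                * ((jap ξ) ^ 2 + τ ^ 2) ^ r))
        ≤ ∫⁻ ξ : EuclideanSpace ℝ (Fin n),
            ENNReal.ofReal (C * lam ^ (-(2 * ((m : ℝ) - r)) - 1)) *
              ENNReal.ofReal (‖G ξ‖ ^ 2) := lintegral_mono key
      _ = ENNReal.ofReal (C * lam ^ (-(2 * ((m : ℝ) - r)) - 1)) *
            ∫⁻ ξ : EuclideanSpace ℝ (Fin n), ENNReal.ofReal (‖G ξ‖ ^ 2) :=
          lintegral_const_mul' _ _ ENNReal.ofReal_ne_top
  · have h2 : Tendsto (fun lam : ℝ => lam ^ (-(2 * ((m : ℝ) - r)) - 1)) atTop (nhds 0) := by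
      have he' : -(2 * ((m : ℝ) - r)) - 1 = -(2 * ((m : ℝ) - r) + 1) := by ring
      rw [he']
      exact tendsto_rpow_neg_atTop (by linarith)
    simpa using h2.const_mul C
end
end
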